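/- For a, b ∈ (0,1], the map f = f_{a,b} has no 2-periodic point x with both x > 1/2 and f(x) > 1/2; i.e., if x ∈ (1/2,1], f(x) ∈ (1/2,1] and f(f(x)) = x, then f(x) = x. -/

import Mathlib

noncomputable def fab (a b x : ℝ) : ℝ :=
  if x ≤ 1/2 then x * (1 + a - a * x) else x * (1 - b + b * x)

theorem fab_le_self_of_half_lt (a : ℝ) {b x : ℝ} (hb : 0 ≤ b) (hx : x ∈ Set.Ioc (1/2 : ℝ) 1) :
    fab a b x ≤ x := by
  obtain ⟨hx_gt, hx_le⟩ := hx
  have h_eq : fab a b x = x - b * (x * (1 - x)) := by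
    rw [fab, if_neg (not_le.mpr hx_gt)]
    ring
  have h_nonneg : 0 ≤ b * (x * (1 - x)) := by
    have : 0 ≤ x := by linarith
    have : 0 ≤ 1 - x := by linarith
    positivity
  linarith

theorem stmt16_general (a b : ℝ) (hb : b ∈ Set.Ioc (0:ℝ) 1)
    (x : ℝ) (hx : x ∈ Set.Ioc (1/2 : ℝ) 1) (hfx : fab a b x ∈ Set.Ioc (1/2 : ℝ) 1)
    (hper : fab a b (fab a b x) = x) :
    fab a b x = x := by
  have h_fx_le := fab_le_self_of_half_lt a hb.1.le hx
  have h_ffx_le := fab_le_self_of_half_lt a hb.1.le hfx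
  linarith

theorem stmt16 (a b : ℝ) (ha : a ∈ Set.Ioc (0:ℝ) 1) (hb : b ∈ Set.Ioc (0:ℝ) 1)
    (x : ℝ) (hx : x ∈ Set.Ioc (1/2 : ℝ) 1) (hfx : fab a b x ∈ Set.Ioc (1/2 : ℝ) 1)
    (hper : fab a b (fab a b x) = x) :
    fab a b x = x :=
  stmt16_general a b hb x hx hfx hper
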